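/- arXiv:1512.03898 — 6 statements merged into one kernel-verified Lean document; each statement's English description precedes it below -/
import Mathlib

section
/- With M multiplication by X, D the derivative on ℂ[X], H = M∘D, B = M∘D² + β•D, the identity B^j ∘ H = (H + j•id) ∘ B^j holds for every natural number j. -/
open Polynomial

/-- Multiplication by `X` as a linear endomorphism of `ℂ[X]`. -/
noncomputable def Mop : Module.End ℂ ℂ[X] := LinearMap.mulLeft ℂ (X : ℂ[X])

/-- The derivative as a linear endomorphism of `ℂ[X]`. -/
noncomputable def Dop : Module.End ℂ ℂ[X] := Polynomial.derivative

/-- `H = M ∘ D`, i.e. `x·d/dx`. -/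
noncomputable def Hop : Module.End ℂ ℂ[X] := Mop * Dop

/-- `B = M ∘ D ∘ D + β • D`, i.e. `B(p) = X·p'' + β·p'`. -/
noncomputable def Bop (β : ℂ) : Module.End ℂ ℂ[X] := Mop * Dop * Dop + β • Dop

/-- The locally finite exponential `e^A p = ∑ₘ Aᵐ p / m!` of a degree-lowering
operator `A` (the series terminates, so it may be truncated at `deg p`). -/
noncomputable def expOp (A : Module.End ℂ ℂ[X]) (p : ℂ[X]) : ℂ[X] :=
  ∑ m ∈ Finset.range (p.natDegree + 1), ((Nat.factorial m : ℂ))⁻¹ • (A ^ m) p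

/-- The canonical commutation relation `D ∘ M = M ∘ D + 1`. -/
lemma DM : Dop * Mop = Mop * Dop + 1 := by
  apply LinearMap.ext
  intro q
  simp [Dop, Mop, Module.End.mul_apply, derivative_mul]
  ring

/-- The commutator identity `B ∘ H = H ∘ B + B`. -/
lemma BH (β : ℂ) : Bop β * Hop = Hop * Bop β + Bop β := by
  unfold Bop Hop
  have h : Dop * Mop = Mop * Dop + 1 := DM
  rw [add_mul, mul_add, smul_mul_assoc, mul_smul_comm]
  rw [show Mop * Dop * Dop * (Mop * Dop) = Mop * Dop * (Dop * Mop) * Dop by noncomm_ring,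
      show Dop * (Mop * Dop) = (Dop * Mop) * Dop by noncomm_ring, h]
  rw [add_mul, one_mul, smul_add]
  noncomm_ring

theorem stmt4 (β : ℂ) (j : ℕ) :
    (Bop β) ^ j * Hop = (Hop + (j : ℂ) • (1 : Module.End ℂ ℂ[X])) * (Bop β) ^ j := by
  induction j with
  | zero => simp
  | succ j ih =>
    rw [pow_succ, mul_assoc, BH, mul_add, ← mul_assoc, ih]
    push_cast
    rw [add_smul, one_smul]
    noncomm_ring
end

section
/- With M multiplication by X, H = M∘D, and B = M∘D² + β•D as linear endomorphisms of ℂ[X], for every natural number m ≥ 1 one has [B^m, M] = 2m • (H ∘ B^(m-1)) + (m*(m-1) + β*m) • B^(m-1). -/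
open Polynomial

lemma BM (β : ℂ) : Bop β * Mop = Mop * Bop β + (2:ℂ) • Hop + β • 1 := by
  apply LinearMap.ext; intro p
  simp [Bop, Hop, Mop, Dop, Module.End.mul_apply, derivative_mul, smul_eq_C_mul, map_ofNat]
  ring

lemma aux (β : ℂ) : ∀ k : ℕ, Bop β ^ (k+1) * Mop - Mop * Bop β ^ (k+1)
    = (2*((k:ℂ)+1)) • (Hop * Bop β ^ k)
      + (((k:ℂ)+1)*(k:ℂ) + β*((k:ℂ)+1)) • Bop β ^ k := by
  intro k
  induction k with
  | zero =>
    simp only [zero_add, pow_one, pow_zero, mul_one, Nat.cast_zero]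
    rw [BM]
    module
  | succ k IH =>
    have hR : Bop β ^ (k+1+1) = Bop β * Bop β ^ (k+1) := pow_succ' _ _
    have e2 : Bop β ^ (k+1) * Mop
        = Mop * Bop β ^ (k+1)
          + ((2*((k:ℂ)+1)) • (Hop * Bop β ^ k)
          + (((k:ℂ)+1)*(k:ℂ) + β*((k:ℂ)+1)) • Bop β ^ k) := by
      rw [← IH]; abel
    have hQ : Bop β ^ (k+1) = Bop β * Bop β ^ k := pow_succ' _ _
    calc Bop β ^ (k+1+1) * Mop - Mop * Bop β ^ (k+1+1)
        = Bop β * (Bop β ^ (k+1) * Mop) - Mop * Bop β ^ (k+1+1) := by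
          rw [hR, mul_assoc]
      _ = (Bop β * Mop) * Bop β ^ (k+1)
          + ((2*((k:ℂ)+1)) • ((Bop β * Hop) * Bop β ^ k)
          + (((k:ℂ)+1)*(k:ℂ) + β*((k:ℂ)+1)) • (Bop β * Bop β ^ k))
          - Mop * (Bop β * Bop β ^ (k+1)) := by
          rw [e2, hR]
          simp only [mul_add, mul_smul_comm, mul_assoc]
      _ = _ := by
          rw [BM, BH, hQ]
          push_cast
          simp only [add_mul, smul_mul_assoc, one_mul, smul_add, mul_assoc]
          match_scalars <;> ring

theorem stmt5 (β : ℂ) (m : ℕ) (hm : 1 ≤ m) :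
    (Bop β) ^ m * Mop - Mop * (Bop β) ^ m
      = (2 * (m : ℂ)) • (Hop * (Bop β) ^ (m - 1))
        + ((m : ℂ) * ((m : ℂ) - 1) + β * (m : ℂ)) • (Bop β) ^ (m - 1) := by
  obtain ⟨k, rfl⟩ : ∃ k, m = k + 1 := ⟨m - 1, by omega⟩
  rw [Nat.add_sub_cancel, aux β k]
  push_cast
  match_scalars <;> ring
end

section
/- Fix k ≥ 2 and let P_n = e^{-D^k/k}(X^n) on ℂ[X]. Then P_n is an eigenfunction of L₁ = X·d/dx - d^k/dx^k with eigenvalue n: X * P_n' - D^k(P_n) = n • P_n. -/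
open Polynomial

/-!
Write `H = X·d/dx` and `A = -(1/k)·Dᵏ`, so that `P_n = e^A Xⁿ`. From `[H, Dʲ] = -j·Dʲ` each term
`Aᵐ Xⁿ` of the exponential series is an eigenvector of `H` with eigenvalue `n - k m`. Summing,
`H P_n = n P_n - k ∑ₘ m/m! · Aᵐ Xⁿ = n P_n - k A P_n = n P_n + Dᵏ P_n`, which is the claim.
-/

lemma Hop_apply (p : ℂ[X]) : Hop p = X * derivative p := rfl

lemma Hop_mul_Dop_pow (j : ℕ) : Hop * Dop ^ j = Dop ^ j * Hop - (j : ℂ) • Dop ^ j := by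
  induction j with
  | zero => simp
  | succ j ih =>
    have hHD : Hop * Dop = Dop * Hop - Dop := by
      refine LinearMap.ext fun p => ?_
      simp [Module.End.mul_apply, Hop_apply, Dop, derivative_mul]
    calc Hop * Dop ^ (j + 1) = (Hop * Dop ^ j) * Dop := by rw [pow_succ, mul_assoc]
      _ = Dop ^ j * (Hop * Dop) - (j : ℂ) • Dop ^ (j + 1) := by
        rw [ih, sub_mul, mul_assoc, smul_mul_assoc, pow_succ]
      _ = Dop ^ (j + 1) * Hop - ((j + 1 : ℕ) : ℂ) • Dop ^ (j + 1) := by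
        rw [hHD, mul_sub, ← mul_assoc, ← pow_succ, Nat.cast_succ, add_smul, one_smul]
        abel

lemma Hop_X_pow (n : ℕ) : Hop ((X : ℂ[X]) ^ n) = (n : ℂ) • (X : ℂ[X]) ^ n := by
  rw [Hop_apply, derivative_X_pow, smul_eq_C_mul]
  rcases n with _ | n
  · simp
  · rw [pow_succ' X n]
    push_cast
    ring

lemma Hop_smul_Dop_pow_pow_apply {p : ℂ[X]} {μ : ℂ} (hp : Hop p = μ • p) (c : ℂ) (k m : ℕ) :
    Hop (((c • Dop ^ k) ^ m) p) = (μ - (k * m : ℕ)) • ((c • Dop ^ k) ^ m) p := by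
  rw [_root_.smul_pow, ← pow_mul, LinearMap.smul_apply, map_smul, ← Module.End.mul_apply,
    Hop_mul_Dop_pow]
  simp only [LinearMap.sub_apply, LinearMap.smul_apply, Module.End.mul_apply, hp, map_smul]
  module

lemma apply_expOp_eq_sum {A : Module.End ℂ ℂ[X]} {p : ℂ[X]}
    (hA : (A ^ (p.natDegree + 1)) p = 0) :
    A (expOp A p) = ∑ m ∈ Finset.range (p.natDegree + 1), ((m : ℂ) / m.factorial) • (A ^ m) p := by
  rw [Finset.sum_range_succ', expOp, map_sum, Finset.sum_range_succ]
  simp only [map_smul, ← Module.End.mul_apply, ← pow_succ', hA, smul_zero, add_zero,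
    Nat.cast_zero, zero_div, zero_smul]
  refine Finset.sum_congr rfl fun m _ => ?_
  rw [Nat.factorial_succ, Nat.cast_mul, Nat.cast_succ,
    div_mul_cancel_left₀ (Nat.cast_add_one_ne_zero m)]

lemma Hop_expOp {p : ℂ[X]} {μ : ℂ} (hp : Hop p = μ • p) (c : ℂ) (k : ℕ)
    (hA : ((c • Dop ^ k) ^ (p.natDegree + 1)) p = 0) :
    Hop (expOp (c • Dop ^ k) p)
      = μ • expOp (c • Dop ^ k) p - (k : ℂ) • (c • Dop ^ k) (expOp (c • Dop ^ k) p) := by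
  rw [apply_expOp_eq_sum hA, expOp, map_sum, Finset.smul_sum, Finset.smul_sum,
    ← Finset.sum_sub_distrib]
  refine Finset.sum_congr rfl fun m _ => ?_
  rw [map_smul, Hop_smul_Dop_pow_pow_apply hp]
  push_cast
  module

lemma smul_Dop_pow_pow_apply_X_pow_eq_zero (c : ℂ) {k : ℕ} (hk : k ≠ 0) (n : ℕ) :
    ((c • Dop ^ k) ^ (n + 1)) ((X : ℂ[X]) ^ n) = 0 := by
  rw [_root_.smul_pow, ← pow_mul, LinearMap.smul_apply, Module.End.pow_apply, Dop,
    iterate_derivative_eq_zero, smul_zero]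
  rw [natDegree_X_pow]
  nlinarith [Nat.pos_of_ne_zero hk]

lemma aeval_Dop_neg_inv_mul_X_pow (k : ℕ) :
    aeval Dop (-(C ((k : ℂ)⁻¹)) * X ^ k) = (-(k : ℂ)⁻¹) • Dop ^ k := by
  rw [← C_neg, ← smul_eq_C_mul, map_smul, aeval_X_pow]

theorem stmt11 (k : ℕ) (hk : 2 ≤ k) (n : ℕ) :
    (X : ℂ[X]) * derivative (expOp (aeval Dop (-(C ((k : ℂ)⁻¹)) * X ^ k)) (X ^ n))
      - (Dop ^ k) (expOp (aeval Dop (-(C ((k : ℂ)⁻¹)) * X ^ k)) (X ^ n))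
      = (n : ℂ) • expOp (aeval Dop (-(C ((k : ℂ)⁻¹)) * X ^ k)) (X ^ n) := by
  have hk0 : k ≠ 0 := by omega
  have hH := Hop_expOp (Hop_X_pow n) (-(k : ℂ)⁻¹) k
    (by rw [natDegree_X_pow]; exact smul_Dop_pow_pow_apply_X_pow_eq_zero _ hk0 n)
  rw [aeval_Dop_neg_inv_mul_X_pow, ← Hop_apply, hH, LinearMap.smul_apply, smul_smul,
    mul_neg, mul_inv_cancel₀ (Nat.cast_ne_zero.mpr hk0)]
  module
end

section
/- Let β ∈ ℂ, B = M∘D² + β•D on ℂ[X], q ∈ ℂ[X] with zero constant term, and P_n = e^{q(B)}(X^n). Then P_n is a monic polynomial of degree n that is an eigenfunction of L₁ = M∘D + q'(B)∘B with eigenvalue n: L₁(P_n) = n • P_n. -/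
open Polynomial

lemma Bop_apply (β : ℂ) (p : ℂ[X]) :
    Bop β p = X * derivative (derivative p) + β • derivative p := by
  simp [Bop, Mop, Dop, Module.End.mul_apply]

def Below (d : ℕ) (p : ℂ[X]) : Prop := ∀ m, d ≤ m → p.coeff m = 0

lemma below_mono {d e : ℕ} {p : ℂ[X]} (h : d ≤ e) (hp : Below d p) : Below e p :=
  fun m hm => hp m (h.trans hm)

lemma below_zero_eq {p : ℂ[X]} (hp : Below 0 p) : p = 0 := by
  ext m; simpa using hp m (Nat.zero_le m)

lemma below_B {β : ℂ} {d : ℕ} {p : ℂ[X]} (hp : Below (d+1) p) : Below d (Bop β p) := by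
  intro m hm
  rw [Bop_apply, coeff_add, coeff_smul, coeff_derivative, hp (m+1) (by omega), zero_mul,
    smul_zero, add_zero]
  cases m with
  | zero => simp [mul_coeff_zero]
  | succ k =>
    rw [coeff_X_mul, coeff_derivative, coeff_derivative, hp (k+2) (by omega)]
    ring

lemma below_B' {β : ℂ} {d : ℕ} {p : ℂ[X]} (hp : Below d p) : Below d (Bop β p) :=
  below_B (below_mono (Nat.le_succ d) hp)

lemma below_Bpow {β : ℂ} {d : ℕ} {p : ℂ[X]} (hp : Below d p) (k : ℕ) :
    Below d ((Bop β ^ k) p) := by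
  induction k with
  | zero => simpa using hp
  | succ j ih => rw [pow_succ', Module.End.mul_apply]; exact below_B' ih

lemma below_aeval {β : ℂ} {d : ℕ} (r : ℂ[X]) {p : ℂ[X]} (hp : Below d p) :
    Below d ((aeval (Bop β) r) p) := by
  induction r using Polynomial.induction_on' with
  | add f g hf hg =>
    rw [map_add, LinearMap.add_apply]
    intro m hm
    rw [coeff_add, hf m hm, hg m hm, add_zero]
  | monomial k c =>
    rw [aeval_monomial, Algebra.algebraMap_eq_smul_one, Module.End.mul_apply,
      LinearMap.smul_apply, Module.End.one_apply]
    intro m hm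
    rw [coeff_smul, below_Bpow hp k m hm, smul_zero]

lemma below_A {β : ℂ} {d : ℕ} {q : ℂ[X]} (hq : q.coeff 0 = 0) {p : ℂ[X]}
    (hp : Below (d+1) p) : Below d ((aeval (Bop β) q) p) := by
  have hqd : q = q.divX * X := by
    conv_lhs => rw [← q.divX_mul_X_add, hq, map_zero, add_zero]
  rw [hqd, map_mul, aeval_X, Module.End.mul_apply]
  exact below_aeval _ (below_B hp)

lemma below_Apow {β : ℂ} {q : ℂ[X]} (hq : q.coeff 0 = 0) :
    ∀ (m d : ℕ) (p : ℂ[X]), Below (d + m) p → Below d ((aeval (Bop β) q ^ m) p) := by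
  intro m
  induction m with
  | zero => intro d p hp; simpa using hp
  | succ j ih =>
    intro d p hp
    rw [pow_succ, Module.End.mul_apply]
    exact ih d _ (below_A hq hp)

lemma below_Apow' {β : ℂ} {q : ℂ[X]} {d : ℕ} {p : ℂ[X]} (hp : Below d p) (m : ℕ) :
    Below d ((aeval (Bop β) q ^ m) p) := by
  induction m with
  | zero => simpa using hp
  | succ j ih => rw [pow_succ', Module.End.mul_apply]; exact below_aeval _ ih

lemma below_Xpow (n : ℕ) : Below (n+1) (X ^ n : ℂ[X]) := by
  intro m hm
  rw [coeff_X_pow, if_neg (by omega)]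

lemma HB (β : ℂ) : Hop * Bop β = Bop β * Hop - Bop β := by
  apply LinearMap.ext; intro p
  simp [Hop, Bop, Mop, Dop, Module.End.mul_apply, LinearMap.sub_apply, LinearMap.add_apply,
    derivative_mul, derivative_smul, smul_add, smul_sub, mul_add, smul_eq_C_mul]
  ring

lemma HBk (β : ℂ) : ∀ k : ℕ, Hop * Bop β ^ k = Bop β ^ k * Hop - (k : ℂ) • Bop β ^ k := by
  intro k
  induction k with
  | zero => simp
  | succ j ih =>
    rw [pow_succ, ← mul_assoc, ih, sub_mul, mul_assoc, HB β]
    push_cast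
    rw [smul_mul_assoc, ← pow_succ]
    rw [mul_sub]
    rw [← mul_assoc, ← pow_succ]
    module

lemma H_aeval (β : ℂ) (r : ℂ[X]) :
    Hop * aeval (Bop β) r = aeval (Bop β) r * Hop - aeval (Bop β) (derivative r) * Bop β := by
  induction r using Polynomial.induction_on' with
  | add f g hf hg =>
    rw [map_add, map_add, map_add, mul_add, add_mul, add_mul, hf, hg]
    abel
  | monomial k c =>
    rw [aeval_monomial, derivative_monomial, aeval_monomial,
      Algebra.algebraMap_eq_smul_one, Algebra.algebraMap_eq_smul_one]
    cases k with
    | zero => simp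
    | succ j =>
      have : Hop * ((c • 1) * Bop β ^ (j+1)) = (c • 1 : Module.End ℂ ℂ[X]) * (Hop * Bop β ^ (j+1)) := by
        simp only [smul_one_mul, mul_smul_comm]
      rw [this, HBk β (j+1)]
      push_cast
      simp only [smul_one_mul, mul_sub, smul_mul_assoc, one_mul, ← pow_succ, smul_smul]

lemma aeval_comm (β : ℂ) (r s : ℂ[X]) :
    aeval (Bop β) r * aeval (Bop β) s = aeval (Bop β) s * aeval (Bop β) r := by
  rw [← map_mul, ← map_mul, mul_comm]

lemma AC_comm (β : ℂ) (q : ℂ[X]) :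
    Commute (aeval (Bop β) q) (aeval (Bop β) (derivative q) * Bop β) := by
  have h : aeval (Bop β) (derivative q) * Bop β = aeval (Bop β) (derivative q * X) := by
    rw [map_mul, aeval_X]
  rw [Commute, SemiconjBy, h, aeval_comm]

lemma HApow (β : ℂ) (q : ℂ[X]) (m : ℕ) :
    Hop * aeval (Bop β) q ^ (m+1) = aeval (Bop β) q ^ (m+1) * Hop
      - ((m : ℂ)+1) • ((aeval (Bop β) (derivative q) * Bop β) * aeval (Bop β) q ^ m) := by
  set A := aeval (Bop β) q with hA
  set Cq := aeval (Bop β) (derivative q) * Bop β with hC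
  induction m with
  | zero => simpa using H_aeval β q
  | succ j ih =>
    rw [pow_succ, ← mul_assoc, ih, sub_mul, mul_assoc, H_aeval β q, mul_sub, ← mul_assoc,
      ← pow_succ, smul_mul_assoc, mul_assoc, ← pow_succ]
    have hcomm : A ^ (j+1) * Cq = Cq * A ^ (j+1) := ((AC_comm β q).pow_left (j+1)).eq
    rw [← hC, hcomm]
    push_cast
    module

lemma Hpow (n : ℕ) : Hop (X ^ n : ℂ[X]) = (n : ℂ) • X ^ n := by
  cases n with
  | zero => simp [Hop, Mop, Dop, Module.End.mul_apply]
  | succ k =>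
    simp only [Hop, Mop, Dop, Module.End.mul_apply, LinearMap.mulLeft_apply,
      LinearMap.coe_mk, derivative_X_pow, smul_eq_C_mul]
    push_cast
    ring

theorem stmt13 (β : ℂ) (q : ℂ[X]) (hq : q.coeff 0 = 0) (n : ℕ) :
    (expOp (aeval (Bop β) q) (X ^ n)).Monic ∧
    (expOp (aeval (Bop β) q) (X ^ n)).natDegree = n ∧
    (Mop * Dop + aeval (Bop β) (derivative q) * Bop β) (expOp (aeval (Bop β) q) (X ^ n))
      = (n : ℂ) • expOp (aeval (Bop β) q) (X ^ n) := by
  set A := aeval (Bop β) q with hA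
  set Cq := aeval (Bop β) (derivative q) * Bop β with hC
  have hexp : expOp A (X ^ n : ℂ[X])
      = ∑ m ∈ Finset.range (n+1), ((Nat.factorial m : ℂ))⁻¹ • (A ^ m) (X^n) := by
    rw [expOp, natDegree_X_pow]
  -- each higher term is Below n
  have hterm : ∀ m : ℕ, Below n ((A^(m+1)) (X^n : ℂ[X])) := by
    intro m
    rw [pow_succ, Module.End.mul_apply]
    exact below_Apow' (below_A hq (below_Xpow n)) m
  have hsplit : expOp A (X^n : ℂ[X]) = X^n
      + ∑ m ∈ Finset.range n, ((Nat.factorial (m+1) : ℂ))⁻¹ • (A^(m+1)) (X^n) := by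
    rw [hexp, Finset.sum_range_succ']
    simp [add_comm]
  have hRbelow : Below n (∑ m ∈ Finset.range n,
      ((Nat.factorial (m+1) : ℂ))⁻¹ • (A^(m+1)) (X^n : ℂ[X])) := by
    intro m hm
    rw [finset_sum_coeff]
    refine Finset.sum_eq_zero fun k _ => ?_
    rw [coeff_smul, hterm k m hm, smul_zero]
  have hPn : (expOp A (X^n : ℂ[X])).coeff n = 1 := by
    rw [hsplit, coeff_add, coeff_X_pow, if_pos rfl, hRbelow n le_rfl, add_zero]
  have hPhigh : ∀ m, n < m → (expOp A (X^n : ℂ[X])).coeff m = 0 := by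
    intro m hm
    rw [hsplit, coeff_add, coeff_X_pow, if_neg (by omega), hRbelow m (le_of_lt hm), add_zero]
  have hdeg : (expOp A (X^n : ℂ[X])).natDegree = n := by
    refine le_antisymm (natDegree_le_iff_coeff_eq_zero.mpr hPhigh)
      (le_natDegree_of_ne_zero ?_)
    rw [hPn]; exact one_ne_zero
  have hmonic : (expOp A (X^n : ℂ[X])).Monic := by
    show (expOp A (X^n : ℂ[X])).leadingCoeff = 1
    rw [leadingCoeff, hdeg, hPn]
  refine ⟨hmonic, hdeg, ?_⟩
  -- the eigenvalue equation
  show (Hop + Cq) (expOp A (X^n)) = (n:ℂ) • expOp A (X^n)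
  have hgn : Cq ((A^n) (X^n : ℂ[X])) = 0 := by
    have h1 : Below 1 ((A^n) (X^n : ℂ[X])) := by
      apply below_Apow hq n 1
      intro m hm
      exact below_Xpow n m (by omega)
    rw [hC, Module.End.mul_apply]
    exact below_zero_eq (below_aeval _ (below_B h1))
  have hfac : ∀ m : ℕ, ((Nat.factorial (m+1) : ℂ))⁻¹ * ((m:ℂ)+1) = ((Nat.factorial m : ℂ))⁻¹ := by
    intro m
    have h0 : ((m:ℂ)+1) ≠ 0 := Nat.cast_add_one_ne_zero m
    have h1 : ((Nat.factorial m : ℂ)) ≠ 0 := Nat.cast_ne_zero.mpr (Nat.factorial_ne_zero m)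
    rw [Nat.factorial_succ]
    push_cast
    field_simp
  have step : ∀ m : ℕ, ((Nat.factorial (m+1) : ℂ))⁻¹ • ((Hop + Cq) ((A^(m+1)) (X^n : ℂ[X])))
      = (n:ℂ) • (((Nat.factorial (m+1) : ℂ))⁻¹ • (A^(m+1)) (X^n))
        + (((Nat.factorial (m+1) : ℂ))⁻¹ • Cq ((A^(m+1)) (X^n))
          - ((Nat.factorial m : ℂ))⁻¹ • Cq ((A^m) (X^n))) := by
    intro m
    have h1 : Hop ((A^(m+1)) (X^n : ℂ[X]))
        = (n:ℂ) • (A^(m+1)) (X^n) - ((m:ℂ)+1) • Cq ((A^m) (X^n)) := by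
      have h2 := congrArg (fun T : Module.End ℂ ℂ[X] => T (X^n)) (HApow β q m)
      simp only [Module.End.mul_apply, LinearMap.sub_apply, LinearMap.smul_apply] at h2
      rw [← hA] at h2
      rw [hC, Module.End.mul_apply, h2, Hpow, map_smul]
    rw [LinearMap.add_apply, h1, smul_add, smul_sub, smul_smul, smul_smul, hfac m,
      mul_comm ((Nat.factorial (m+1) : ℂ))⁻¹ (n:ℂ), ← smul_smul]
    abel
  have base : ((Nat.factorial 0 : ℂ))⁻¹ • ((Hop + Cq) ((A^0) (X^n : ℂ[X])))
      = (n:ℂ) • (((Nat.factorial 0 : ℂ))⁻¹ • (A^0) (X^n))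
        + ((Nat.factorial 0 : ℂ))⁻¹ • Cq ((A^0) (X^n)) := by
    simp only [pow_zero, Module.End.one_apply, LinearMap.add_apply, Hpow, Nat.factorial_zero]
    simp [smul_add]
  rw [hexp, map_sum]
  simp only [map_smul]
  rw [Finset.sum_range_succ' (fun m => ((Nat.factorial m : ℂ))⁻¹ • ((Hop + Cq) ((A^m) (X^n)))) n]
  rw [Finset.sum_congr rfl (fun m _ => step m), base]
  rw [Finset.sum_add_distrib,
    Finset.sum_range_sub (fun m => ((Nat.factorial m : ℂ))⁻¹ • Cq ((A^m) (X^n : ℂ[X]))) n]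
  simp only [hgn, smul_zero, zero_sub]
  rw [Finset.smul_sum,
    Finset.sum_range_succ' (fun m => (n:ℂ) • (((Nat.factorial m : ℂ))⁻¹ • (A^m) (X^n))) n]
  abel
end

section
/- Let β ∈ ℂ, B(p) = X*p'' + β•p' on ℂ[X], q ∈ ℂ[X] with zero constant term, and P_n = e^{q(B)}(X^n). Then the lowering formula B(P_n) = n*(n-1+β) • P_{n-1} holds for all n ≥ 1. -/
open Polynomial

/-! Since `A = q(B)` commutes with `B`, so does `e^A`; hence `B P_n = e^A (B Xⁿ)`, and
`B Xⁿ = n(n - 1 + β) Xⁿ⁻¹`. Truncating the exponential sums is harmless because `B`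
lowers degrees by one and `q(0) = 0` makes `A = q₁(B) B`, so `Aᵐ` kills every polynomial of
degree `< m`. -/

section expOp

variable {A : Module.End ℂ ℂ[X]} (hA : ∀ (p : ℂ[X]) (m : ℕ), p.natDegree < m → (A ^ m) p = 0)
include hA

lemma expOp_eq_sum_range (p : ℂ[X]) {N : ℕ} (hN : p.natDegree < N) :
    expOp A p = ∑ m ∈ Finset.range N, ((Nat.factorial m : ℂ))⁻¹ • (A ^ m) p := by
  refine Finset.sum_subset (Finset.range_subset_range.2 hN) fun m _ hm ↦ ?_
  rw [hA p m (by simpa using hm), smul_zero]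

lemma expOp_smul (c : ℂ) (p : ℂ[X]) : expOp A (c • p) = c • expOp A p := by
  rw [expOp_eq_sum_range hA (c • p) ((natDegree_smul_le c p).trans_lt p.natDegree.lt_succ_self),
    expOp, Finset.smul_sum]
  simp only [map_smul, smul_comm c]

lemma map_expOp {T : Module.End ℂ ℂ[X]} (hT : Commute T A) {p : ℂ[X]}
    (hdeg : (T p).natDegree ≤ p.natDegree) : T (expOp A p) = expOp A (T p) := by
  rw [expOp_eq_sum_range hA (T p) (Nat.lt_succ_of_le hdeg), expOp, map_sum]
  simp only [map_smul, ← Module.End.mul_apply, (hT.pow_right _).eq]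

end expOp

section aeval

variable {R S : Type*} [CommSemiring R] [Semiring S] [Algebra R S]

lemma commute_self_aeval (a : S) (r : R[X]) : Commute a (aeval a r) := by
  simpa using (Commute.all X r).map (aeval a)

lemma aeval_pow_eq_of_coeff_zero (a : S) {q : R[X]} (hq : q.coeff 0 = 0) (m : ℕ) :
    aeval a q ^ m = aeval a q.divX ^ m * a ^ m := by
  have hqX : aeval a q = aeval a q.divX * a := by
    conv_lhs => rw [← divX_mul_X_add q, hq]
    simp
  rw [hqX, ((commute_self_aeval a q.divX).symm).mul_pow]

end aeval

lemma natDegree_Bop_le (β : ℂ) (p : ℂ[X]) : (Bop β p).natDegree ≤ p.natDegree - 1 := by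
  have hD := natDegree_derivative_le p
  rw [Bop_apply]
  refine natDegree_add_le_of_degree_le ?_ ((natDegree_smul_le _ _).trans hD)
  by_cases hDD : derivative (derivative p) = 0
  · simp [hDD]
  have hD0 : (derivative p).natDegree ≠ 0 := fun h ↦ hDD (derivative_of_natDegree_zero h)
  have := natDegree_derivative_lt hD0
  rw [natDegree_X_mul hDD]
  omega

lemma Bop_pow_apply_eq_zero (β : ℂ) {p : ℂ[X]} {m : ℕ} (h : p.natDegree < m) :
    (Bop β ^ m) p = 0 := by
  induction m generalizing p with
  | zero => omega
  | succ m ih =>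
    rw [pow_succ, Module.End.mul_apply]
    by_cases hm : m = 0
    · subst hm
      obtain ⟨c, rfl⟩ : ∃ c, p = C c := ⟨_, eq_C_of_natDegree_eq_zero (Nat.lt_one_iff.1 h)⟩
      simp [Bop_apply]
    exact ih ((natDegree_Bop_le β p).trans_lt (by omega))

lemma Bop_X_pow (β : ℂ) {n : ℕ} (hn : 1 ≤ n) :
    Bop β ((X : ℂ[X]) ^ n) = ((n : ℂ) * ((n : ℂ) - 1 + β)) • X ^ (n - 1) := by
  obtain ⟨k, rfl⟩ := Nat.exists_eq_add_of_le' hn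
  simp only [Bop_apply, derivative_X_pow, derivative_C_mul_X_pow, smul_eq_C_mul, Nat.add_sub_cancel]
  rcases k with _ | k
  · simp
  · simp only [Nat.add_sub_cancel, map_mul, map_sub, map_add, map_natCast, map_one]
    push_cast
    ring

lemma aeval_Bop_pow_apply_eq_zero (β : ℂ) {q : ℂ[X]} (hq : q.coeff 0 = 0) (p : ℂ[X]) (m : ℕ)
    (h : p.natDegree < m) : (aeval (Bop β) q ^ m) p = 0 := by
  rw [aeval_pow_eq_of_coeff_zero _ hq, Module.End.mul_apply, Bop_pow_apply_eq_zero β h, map_zero]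

theorem stmt14 (β : ℂ) (q : ℂ[X]) (hq : q.coeff 0 = 0) (n : ℕ) (hn : 1 ≤ n) :
    Bop β (expOp (aeval (Bop β) q) (X ^ n))
      = ((n : ℂ) * ((n : ℂ) - 1 + β)) • expOp (aeval (Bop β) q) (X ^ (n - 1)) := by
  have hA := aeval_Bop_pow_apply_eq_zero β hq
  have hB : Commute (Bop β) (aeval (Bop β) q) := commute_self_aeval _ q
  rw [map_expOp hA hB (natDegree_Bop_le β _ |>.trans (Nat.sub_le _ _)), Bop_X_pow β hn,
    expOp_smul hA]
end

section
/- Let α, β ∈ ℂ, B(p) = X²*p''' + αX*p'' + β*p' on ℂ[X], and P_n = e^{B}(X^n). Then P_n is a monic degree-n polynomial satisfying L₁(P_n) = n • P_n where L₁(p) = X²*p''' + αX*p'' + β*p' + X*p', and the lowering formula B(P_n) = n*((n-1)*(n-2) + α*(n-1) + β) • P_{n-1} holds for n ≥ 1. -/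
open Polynomial

/-- `B = M² ∘ D³ + α • (M ∘ D²) + β • D`, i.e. `B(p) = X²·p''' + α X·p'' + β·p'`. -/
noncomputable def B2op (α β : ℂ) : Module.End ℂ ℂ[X] :=
  Mop ^ 2 * Dop ^ 3 + α • (Mop * Dop ^ 2) + β • Dop

noncomputable def cc (α β : ℂ) (k : ℕ) : ℂ :=
  (k : ℂ) * (((k:ℂ)-1)*((k:ℂ)-2) + α*((k:ℂ)-1) + β)

lemma B2op_apply (α β : ℂ) (p : ℂ[X]) :
    B2op α β p = X^2 * derivative (derivative (derivative p))
      + α • (X * derivative (derivative p)) + β • derivative p := by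
  simp [B2op, Mop, Dop, Module.End.mul_apply, LinearMap.mulLeft_apply, pow_succ, pow_zero]
  ring

lemma B2op_X_pow (α β : ℂ) (k : ℕ) :
    B2op α β (X ^ k : ℂ[X]) = cc α β k • X ^ (k - 1) := by
  match k with
  | 0 => simp [B2op_apply, cc]
  | 1 => simp [B2op_apply, cc]
  | 2 =>
    simp only [B2op_apply, derivative_X_pow, derivative_C_mul, smul_eq_C_mul, cc]
    norm_num
    ring
  | (m+3) =>
    simp only [B2op_apply, derivative_X_pow, derivative_C_mul, smul_eq_C_mul, cc]
    push_cast
    norm_num [pow_succ, map_ofNat]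
    ring

noncomputable def gam (α β : ℂ) (n : ℕ) : ℕ → ℂ
  | 0 => 1
  | m+1 => cc α β (n - m) * gam α β n m

noncomputable def aa (α β : ℂ) (n m : ℕ) : ℂ := (m.factorial : ℂ)⁻¹ * gam α β n m

lemma B2op_pow_X_pow (α β : ℂ) (n m : ℕ) :
    ((B2op α β) ^ m) (X ^ n : ℂ[X]) = gam α β n m • X ^ (n - m) := by
  induction m with
  | zero => simp [gam]
  | succ m ih =>
    rw [pow_succ', Module.End.mul_apply, ih, map_smul, B2op_X_pow, smul_smul]
    have : n - m - 1 = n - (m+1) := by omega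
    rw [this, mul_comm]
    rfl

lemma expOp_eq (α β : ℂ) (n : ℕ) :
    expOp (B2op α β) (X ^ n) = ∑ m ∈ Finset.range (n+1), aa α β n m • X ^ (n - m) := by
  rw [expOp, natDegree_X_pow]
  exact Finset.sum_congr rfl fun m _ => by rw [B2op_pow_X_pow, smul_smul]; rfl

lemma cc_zero (α β : ℂ) : cc α β 0 = 0 := by simp [cc]

lemma gam_top (α β : ℂ) (n : ℕ) : gam α β n (n+1) = 0 := by
  show cc α β (n - n) * _ = 0
  simp [cc_zero]

lemma aa_zero (α β : ℂ) (n : ℕ) : aa α β n 0 = 1 := by simp [aa, gam]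

lemma aa_top (α β : ℂ) (n : ℕ) : aa α β n (n+1) = 0 := by simp [aa, gam_top]

lemma aa_succ (α β : ℂ) (n m : ℕ) :
    ((m:ℂ)+1) * aa α β n (m+1) = aa α β n m * cc α β (n - m) := by
  have h : ((m+1).factorial : ℂ) = ((m:ℂ)+1) * (m.factorial : ℂ) := by
    push_cast [Nat.factorial_succ]; ring
  have h1 : ((m:ℂ)+1) ≠ 0 := Nat.cast_add_one_ne_zero m
  have h2 : ((m.factorial : ℂ)) ≠ 0 := by
    exact_mod_cast Nat.cast_ne_zero.mpr (Nat.factorial_ne_zero m)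
  rw [aa, aa, h, show gam α β n (m+1) = cc α β (n-m) * gam α β n m from rfl]
  field_simp

lemma gam_shift (α β : ℂ) (n : ℕ) : ∀ m, gam α β n (m+1) = cc α β n * gam α β (n-1) m := by
  intro m
  induction m with
  | zero => show cc α β (n-0) * 1 = cc α β n * 1; simp
  | succ m ih =>
    show cc α β (n - (m+1)) * gam α β n (m+1) = cc α β n * (cc α β (n-1-m) * gam α β (n-1) m)
    rw [ih, show n - (m+1) = n - 1 - m by omega]
    ring

noncomputable def Pp (α β : ℂ) (n : ℕ) : ℂ[X] :=
  ∑ m ∈ Finset.range (n+1), aa α β n m • X ^ (n - m)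

lemma expOp_eq' (α β : ℂ) (n : ℕ) : expOp (B2op α β) (X ^ n) = Pp α β n := expOp_eq α β n

lemma Pp_eq_add (α β : ℂ) (n : ℕ) :
    Pp α β n = X ^ n + ∑ i ∈ Finset.range n, aa α β n (i+1) • X ^ (n-(i+1)) := by
  rw [Pp, Finset.sum_range_succ']
  simp [aa_zero]
  rw [add_comm]

lemma deg_lt (α β : ℂ) (n : ℕ) :
    (∑ i ∈ Finset.range n, aa α β n (i+1) • X ^ (n-(i+1)) : ℂ[X]).degree
      < ((X : ℂ[X]) ^ n).degree := by
  rw [degree_X_pow]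
  apply lt_of_le_of_lt (Polynomial.degree_sum_le _ _)
  rw [Finset.sup_lt_iff (by exact_mod_cast WithBot.bot_lt_coe n)]
  intro i hi
  apply lt_of_le_of_lt (degree_smul_le _ _)
  rw [degree_X_pow]
  have hi' := Finset.mem_range.mp hi
  exact_mod_cast (by omega : n - (i+1) < n)

lemma Pp_monic (α β : ℂ) (n : ℕ) : (Pp α β n).Monic := by
  rw [Pp_eq_add]
  exact (monic_X_pow n).add_of_left (deg_lt α β n)

lemma Pp_natDegree (α β : ℂ) (n : ℕ) : (Pp α β n).natDegree = n := by
  have : (Pp α β n).degree = n := by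
    rw [Pp_eq_add, degree_add_eq_left_of_degree_lt (deg_lt α β n), degree_X_pow]
  exact natDegree_eq_of_degree_eq_some this

lemma lower (α β : ℂ) (n : ℕ) :
    B2op α β (Pp α β n)
      = ∑ m ∈ Finset.range (n+1), (((m:ℂ)+1) * aa α β n (m+1)) • X ^ (n - (m+1)) := by
  rw [Pp, map_sum]
  refine Finset.sum_congr rfl fun m _ => ?_
  rw [map_smul, B2op_X_pow, smul_smul, aa_succ, show n - m - 1 = n - (m+1) by omega]

lemma HX (k : ℕ) : (X : ℂ[X]) * derivative (X ^ k) = ((k:ℕ):ℂ) • X ^ k := by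
  cases k with
  | zero => simp
  | succ k =>
    rw [derivative_X_pow, smul_eq_C_mul]
    push_cast
    norm_num
    ring

lemma claim3 (α β : ℂ) (n : ℕ) :
    B2op α β (Pp α β n) + X * derivative (Pp α β n) = (n:ℂ) • Pp α β n := by
  set g : ℕ → ℂ[X] := fun m => ((m:ℂ) * aa α β n m) • X ^ (n - m) with hg
  have h1 : B2op α β (Pp α β n) = ∑ m ∈ Finset.range (n+1), g (m+1) := by
    rw [lower]
    refine Finset.sum_congr rfl fun m _ => ?_
    simp only [hg]
    push_cast
    ring_nf
  have h2 : ∑ m ∈ Finset.range (n+1), g (m+1) = ∑ m ∈ Finset.range (n+1), g m := by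
    have key := Finset.sum_range_succ' g (n+1)
    rw [Finset.sum_range_succ g (n+1)] at key
    have hg0 : g 0 = 0 := by simp [hg]
    have hgtop : g (n+1) = 0 := by simp [hg, aa_top]
    rw [hg0, hgtop, add_zero, add_zero] at key
    exact key.symm
  have h3 : X * derivative (Pp α β n)
      = ∑ m ∈ Finset.range (n+1), (((n-m:ℕ):ℂ) * aa α β n m) • X ^ (n-m) := by
    rw [Pp, derivative_sum, Finset.mul_sum]
    refine Finset.sum_congr rfl fun m _ => ?_
    rw [derivative_smul, mul_smul_comm, HX, smul_smul, mul_comm]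
  rw [h1, h2, h3, Pp, Finset.smul_sum, ← Finset.sum_add_distrib]
  refine Finset.sum_congr rfl fun m hm => ?_
  have hm' : m ≤ n := Nat.lt_succ_iff.mp (Finset.mem_range.mp hm)
  simp only [hg]
  rw [smul_smul, ← add_smul]
  congr 1
  rw [Nat.cast_sub hm']
  ring

lemma aa_succ' (α β : ℂ) (n m : ℕ) :
    ((m:ℂ)+1) * aa α β n (m+1) = (m.factorial : ℂ)⁻¹ * gam α β n (m+1) := by
  have h2 : ((m.factorial : ℂ)) ≠ 0 := Nat.cast_ne_zero.mpr (Nat.factorial_ne_zero m)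
  have h1 : ((m:ℂ)+1) ≠ 0 := Nat.cast_add_one_ne_zero m
  rw [aa, Nat.factorial_succ]
  push_cast
  field_simp

lemma claim4 (α β : ℂ) (n : ℕ) (hn : 1 ≤ n) :
    B2op α β (Pp α β n) = cc α β n • Pp α β (n-1) := by
  rw [lower, Pp, Finset.smul_sum, Nat.sub_add_cancel hn, Finset.sum_range_succ]
  have htop : (((n:ℂ)+1) * aa α β n (n+1)) • (X:ℂ[X]) ^ (n - (n+1)) = 0 := by
    simp [aa_top]
  rw [htop, add_zero]
  refine Finset.sum_congr rfl fun m hm => ?_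
  rw [aa_succ', gam_shift, show n - (m+1) = n - 1 - m by omega, smul_smul, aa]
  ring_nf

theorem stmt19 (α β : ℂ) (n : ℕ) :
    (expOp (B2op α β) (X ^ n)).Monic ∧
    (expOp (B2op α β) (X ^ n)).natDegree = n ∧
    (X : ℂ[X]) ^ 2 * derivative (derivative (derivative (expOp (B2op α β) (X ^ n))))
      + α • ((X : ℂ[X]) * derivative (derivative (expOp (B2op α β) (X ^ n))))
      + β • derivative (expOp (B2op α β) (X ^ n))
      + (X : ℂ[X]) * derivative (expOp (B2op α β) (X ^ n))
      = (n : ℂ) • expOp (B2op α β) (X ^ n) ∧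
    (1 ≤ n →
      B2op α β (expOp (B2op α β) (X ^ n))
        = ((n : ℂ) * (((n : ℂ) - 1) * ((n : ℂ) - 2) + α * ((n : ℂ) - 1) + β))
            • expOp (B2op α β) (X ^ (n - 1))) := by
  rw [expOp_eq']
  refine ⟨Pp_monic α β n, Pp_natDegree α β n, ?_, ?_⟩
  · rw [← B2op_apply]
    exact claim3 α β n
  · intro hn
    rw [expOp_eq', show ((n:ℂ) * (((n:ℂ)-1)*((n:ℂ)-2) + α*((n:ℂ)-1) + β)) = cc α β n from rfl]
    exact claim4 α β n hn
end
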